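/- In any group G containing elements σ_1, …, σ_{n-1} satisfying the braid relations, the band generators satisfy the triple relations a_{ts} a_{sr} = a_{tr} a_{ts} and a_{tr} a_{ts} = a_{sr} a_{tr} for all n ≥ t > s > r ≥ 1. -/

import Mathlib

/-- The descending product `σ (t-1) * σ (t-2) * ⋯ * σ (s+1)` used to conjugate `σ s`. -/
def bandConj {G : Type*} [Group G] (σ : ℕ → G) (t s : ℕ) : G :=
  (((List.range (t - s - 1)).map (fun i => σ (t - 1 - i))).prod)

/-- The band generator `a_{t s} = (σ_{t-1} ⋯ σ_{s+1}) σ_s (σ_{s+1}⁻¹ ⋯ σ_{t-1}⁻¹)`. -/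
def bandGen {G : Type*} [Group G] (σ : ℕ → G) (t s : ℕ) : G :=
  bandConj σ t s * σ s * (bandConj σ t s)⁻¹

/-- `σ 1, …, σ (n-1)` satisfy the braid relations. -/
def BraidRels {G : Type*} [Group G] (n : ℕ) (σ : ℕ → G) : Prop :=
  (∀ i j, 1 ≤ i → i ≤ n - 1 → 1 ≤ j → j ≤ n - 1 → (i + 2 ≤ j ∨ j + 2 ≤ i) →
      σ i * σ j = σ j * σ i) ∧
  (∀ i, 1 ≤ i → i ≤ n - 2 → σ i * σ (i + 1) * σ i = σ (i + 1) * σ i * σ (i + 1))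

section Aux
variable {G : Type*} [Group G]

lemma commute_bandConj (σ : ℕ → G) (t s : ℕ) (g : G)
    (hc : ∀ j, s + 1 ≤ j → j ≤ t - 1 → Commute g (σ j)) :
    Commute g (bandConj σ t s) := by
  apply Commute.list_prod_right
  intro x hx
  simp only [List.mem_map, List.mem_range] at hx
  obtain ⟨i, hi, rfl⟩ := hx
  exact hc _ (by omega) (by omega)

lemma commute_bandGen (σ : ℕ → G) (s r : ℕ) (hrs : r < s) (g : G)
    (hc : ∀ k, r ≤ k → k ≤ s - 1 → Commute g (σ k)) :
    Commute g (bandGen σ s r) := by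
  have h1 : Commute g (bandConj σ s r) :=
    commute_bandConj σ s r g fun j h1 h2 => hc j (by omega) (by omega)
  exact (h1.mul_right (hc r le_rfl (by omega))).mul_right h1.inv_right

lemma bandConj_one (σ : ℕ → G) (t s : ℕ) (h : t ≤ s + 1) : bandConj σ t s = 1 := by
  unfold bandConj
  have : t - s - 1 = 0 := by omega
  simp [this]

lemma bandConj_peel (σ : ℕ → G) (t s : ℕ) (h : s < t) :
    bandConj σ (t + 1) s = σ t * bandConj σ t s := by
  unfold bandConj
  have h1 : t + 1 - s - 1 = (t - s - 1) + 1 := by omega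
  rw [h1, List.range_succ_eq_map, List.map_cons, List.prod_cons, List.map_map]
  have h2 : ((fun i => σ (t + 1 - 1 - i)) ∘ Nat.succ) = fun i => σ (t - 1 - i) := by
    funext i
    simp only [Function.comp_apply]
    congr 1
    omega
  rw [h2]
  norm_num

lemma bandConj_split (σ : ℕ → G) (t s r : ℕ) (hrs : r < s) (hst : s < t) :
    bandConj σ t r = bandConj σ t s * σ s * bandConj σ s r := by
  induction t, hst using Nat.le_induction with
  | base =>
      rw [bandConj_one σ (s + 1) s le_rfl, bandConj_peel σ s r hrs]
      group
  | succ t ht ih =>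
      rw [bandConj_peel σ t r (by omega), bandConj_peel σ t s ht, ih]
      group

lemma bandGen_peel (σ : ℕ → G) (s r : ℕ) (h : r < s) :
    bandGen σ (s + 1) r = σ s * bandGen σ s r * (σ s)⁻¹ := by
  unfold bandGen
  rw [bandConj_peel σ s r h]
  group

lemma braid_aux (x y z : G) (c : x * z = z * x) (b : y * x * y = x * y * x)
    (ih : y * z * y = z * y * z) :
    x * (y * z * y⁻¹) * x = (y * z * y⁻¹) * x * (y * z * y⁻¹) := by
  have c' : ∀ w : G, x * (z * w) = z * (x * w) := fun w => by
    rw [← mul_assoc, c, mul_assoc]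
  have b' : ∀ w : G, y * (x * (y * w)) = x * (y * (x * w)) := fun w => by
    rw [← mul_assoc, ← mul_assoc, b, mul_assoc, mul_assoc]
  have ih' : ∀ w : G, y * (z * (y * w)) = z * (y * (z * w)) := fun w => by
    rw [← mul_assoc, ← mul_assoc, ih, mul_assoc, mul_assoc]
  have key : x * (y * (z * (x * y))) = y * (z * (x * (y * z))) := by
    calc x * (y * (z * (x * y))) = x * (y * (x * (z * y))) := by rw [c' y]
    _ = y * (x * (y * (z * y))) := by rw [b' (z * y)]
    _ = y * (x * (z * (y * z))) := by rw [← mul_assoc z y z, ← ih, mul_assoc]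
    _ = y * (z * (x * (y * z))) := by rw [c' (y * z)]
  apply mul_right_cancel (b := y * x)
  have hx : ∀ w : G, x * (y * (x * w)) = y * (x * (y * w)) := fun w => (b' w).symm
  calc x * (y * z * y⁻¹) * x * (y * x)
      = x * (y * (z * (y⁻¹ * (x * (y * x))))) := by simp only [mul_assoc]
    _ = x * (y * (z * (y⁻¹ * (y * (x * (y * 1)))))) := by rw [← hx 1]; simp
    _ = x * (y * (z * (x * y))) := by simp
    _ = y * (z * (x * (y * z))) := key
    _ = y * (z * (y⁻¹ * (y * (x * (y * z))))) := by simp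
    _ = y * (z * (y⁻¹ * (x * (y * (x * z))))) := by rw [hx z]
    _ = y * (z * (y⁻¹ * (x * (y * (z * x))))) := by rw [c]
    _ = (y * z * y⁻¹) * x * (y * z * y⁻¹) * (y * x) := by simp only [mul_assoc]; simp

lemma triple_aux (d a x : G) (hda : d * a = a * d) (hbr : x * a * x = a * x * a) :
    (d * x * d⁻¹) * a = (d * x * a * x⁻¹ * d⁻¹) * (d * x * d⁻¹) ∧
    (d * x * a * x⁻¹ * d⁻¹) * (d * x * d⁻¹) = a * (d * x * a * x⁻¹ * d⁻¹) := by
  have hd' : d⁻¹ * a = a * d⁻¹ := by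
    rw [inv_mul_eq_iff_eq_mul, ← mul_assoc, hda, mul_inv_cancel_right]
  have hmid : (d * x * a * x⁻¹ * d⁻¹) * (d * x * d⁻¹) = d * x * a * d⁻¹ := by
    group
  constructor
  · rw [hmid]
    calc d * x * d⁻¹ * a = d * x * (d⁻¹ * a) := by simp only [mul_assoc]
    _ = d * x * (a * d⁻¹) := by rw [hd']
    _ = d * x * a * d⁻¹ := by simp only [mul_assoc]
  · rw [hmid]
    have h2 : a * (x * a * x⁻¹) = x * a := by
      rw [← mul_assoc, ← mul_assoc, ← hbr]
      group
    calc d * x * a * d⁻¹ = d * (x * a) * d⁻¹ := by simp only [mul_assoc]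
    _ = d * (a * (x * a * x⁻¹)) * d⁻¹ := by rw [h2]
    _ = d * a * (x * a * x⁻¹) * d⁻¹ := by simp only [mul_assoc]
    _ = a * d * (x * a * x⁻¹) * d⁻¹ := by rw [hda]
    _ = a * (d * x * a * x⁻¹ * d⁻¹) := by simp only [mul_assoc]

lemma braid_band (n : ℕ) (σ : ℕ → G) (h : BraidRels n σ) :
    ∀ s r : ℕ, 1 ≤ r → r < s → s ≤ n - 1 →
      σ s * bandGen σ s r * σ s = bandGen σ s r * σ s * bandGen σ s r := by
  intro s r hr hrs
  induction s, hrs using Nat.le_induction with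
  | base =>
      intro hsn
      have hb : bandGen σ (r + 1) r = σ r := by
        unfold bandGen
        rw [bandConj_one σ (r + 1) r le_rfl]
        group
      rw [hb]
      exact (h.2 r hr (by omega)).symm
  | succ s hs ih =>
      intro hsn
      have hpeel : bandGen σ (s + 1) r = σ s * bandGen σ s r * (σ s)⁻¹ :=
        bandGen_peel σ s r hs
      rw [hpeel]
      have hcomm : Commute (σ (s + 1)) (bandGen σ s r) := by
        apply commute_bandGen σ s r hs
        intro k hk1 hk2
        exact h.1 (s + 1) k (by omega) (by omega) (by omega) (by omega)
          (Or.inr (by omega))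
      exact braid_aux (σ (s + 1)) (σ s) (bandGen σ s r) hcomm
        ((h.2 s (by omega) (by omega))) (ih (by omega))

end Aux

/-- the triple relations `a_{ts} a_{sr} = a_{tr} a_{ts}` and
`a_{tr} a_{ts} = a_{sr} a_{tr}` for `n ≥ t > s > r ≥ 1`. -/
theorem bandGen_triple {G : Type*} [Group G] (n : ℕ) (σ : ℕ → G)
    (h : BraidRels n σ) :
    ∀ t s r : ℕ, 1 ≤ r → r < s → s < t → t ≤ n →
      bandGen σ t s * bandGen σ s r = bandGen σ t r * bandGen σ t s ∧
      bandGen σ t r * bandGen σ t s = bandGen σ s r * bandGen σ t r := by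
  intro t s r hr hrs hst htn
  set d := bandConj σ t s with hd
  set a := bandGen σ s r with ha
  have hda : Commute d a := by
    apply Commute.symm
    apply commute_bandConj σ t s a
    intro j hj1 hj2
    apply Commute.symm
    apply commute_bandGen σ s r hrs
    intro k hk1 hk2
    exact h.1 j k (by omega) (by omega) (by omega) (by omega) (Or.inr (by omega))
  have hbr : σ s * a * σ s = a * σ s * a :=
    braid_band n σ h s r hr hrs (by omega)
  have hts : bandGen σ t s = d * σ s * d⁻¹ := rfl
  have htr : bandGen σ t r = d * σ s * a * (σ s)⁻¹ * d⁻¹ := by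
    unfold bandGen
    rw [bandConj_split σ t s r hrs hst]
    rw [ha]
    unfold bandGen
    group
    rfl
  rw [hts, htr]
  exact triple_aux d a (σ s) hda.eq hbr
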